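/- arXiv:1001.4126 — 6 statements merged into one kernel-verified Lean document; each statement's English description precedes it below -/
import Mathlib

section
/- Let g be a Lie algebra over a commutative ring and R : g → g a linear map satisfying the modified Yang–Baxter equation [R(X),R(Y)] − R([R(X),Y] + [X,R(Y)]) = −[X,Y] for all X, Y ∈ g. Then the bracket [X,Y]_R := [R(X),Y] + [X,R(Y)] is a Lie bracket on g, i.e. it is bilinear, alternating, and satisfies the Jacobi identity. -/
/-!
STATEMENT 0.  Let `g` be a Lie algebra over a commutative ring and
`r : g → g` a linear map satisfying the modified Yang–Baxter equation
`[r X, r Y] − r([r X, Y] + [X, r Y]) = −[X, Y]`.  Then the `R`-bracket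
`[X,Y]_R := [r X, Y] + [X, r Y]` is a Lie bracket: bilinear, alternating,
and satisfying the Jacobi identity.
-/

/-- The `R`-bracket `[X,Y]_R = [R(X),Y] + [X,R(Y)]` attached to a linear map `r`. -/
def rBracket {R L : Type*} [CommRing R] [LieRing L] [LieAlgebra R L]
    (r : L →ₗ[R] L) (X Y : L) : L :=
  ⁅r X, Y⁆ + ⁅X, r Y⁆

theorem rBracket_isLieBracket_of_modifiedYangBaxter
    {R L : Type*} [CommRing R] [LieRing L] [LieAlgebra R L]
    (r : L →ₗ[R] L)
    (hmYB : ∀ X Y : L, ⁅r X, r Y⁆ - r (⁅r X, Y⁆ + ⁅X, r Y⁆) = -⁅X, Y⁆) :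
    -- bilinearity in the first argument
    (∀ (a b : R) (X Y Z : L),
        rBracket r (a • X + b • Y) Z = a • rBracket r X Z + b • rBracket r Y Z) ∧
    -- bilinearity in the second argument
    (∀ (a b : R) (X Y Z : L),
        rBracket r Z (a • X + b • Y) = a • rBracket r Z X + b • rBracket r Z Y) ∧
    -- alternating
    (∀ X : L, rBracket r X X = 0) ∧
    -- Jacobi identity
    (∀ X Y Z : L,
        rBracket r X (rBracket r Y Z) + rBracket r Y (rBracket r Z X) +
          rBracket r Z (rBracket r X Y) = 0) := by
  have hr : ∀ Y Z : L, r (⁅r Y, Z⁆ + ⁅Y, r Z⁆) = ⁅r Y, r Z⁆ + ⁅Y, Z⁆ := by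
    intro Y Z
    have h := hmYB Y Z
    have h2 : r (⁅r Y, Z⁆ + ⁅Y, r Z⁆)
        = ⁅r Y, r Z⁆ - (⁅r Y, r Z⁆ - r (⁅r Y, Z⁆ + ⁅Y, r Z⁆)) := by abel
    rw [h2, h]; abel
  refine ⟨?_, ?_, ?_, ?_⟩
  · intro a b X Y Z
    simp only [rBracket, map_add, map_smul, add_lie, smul_lie, lie_add, lie_smul,
      smul_add]
    abel
  · intro a b X Y Z
    simp only [rBracket, map_add, map_smul, add_lie, smul_lie, lie_add, lie_smul,
      smul_add]
    abel
  · intro X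
    show ⁅r X, X⁆ + ⁅X, r X⁆ = 0
    rw [← lie_skew X (r X)]; abel
  · intro X Y Z
    simp only [rBracket, hr, lie_add, add_lie]
    have j1 := lie_jacobi (r X) (r Y) Z
    have j2 := lie_jacobi (r Y) (r Z) X
    have j3 := lie_jacobi (r Z) (r X) Y
    have j4 := lie_jacobi X Y Z
    linear_combination (norm := abel1) j1 + j2 + j3 + j4
end

section
/- The set 𝒟⁻ of pseudo-differential operators over a commutative differential ring (𝒜, D), with componentwise addition and with multiplication determined by (f D^i)·(g D^j) = Σ_{r≥0} binom(i,r) f D^r(g) D^{i+j−r}, is an associative unital (noncommutative) ring with unit 1 = 1·D⁰; moreover the element D = 1·D¹ is invertible in 𝒟⁻, with inverse D^{−1} = 1·D^{−1}. -/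
/-!
Pseudo-differential operators of the first type `𝒟⁻` over a commutative
differential ring `(𝒜, D)`.  An operator `A = Σ_{i ∈ ℤ} f_i D^i` (with
`f_i = 0` for all sufficiently large `i`) is encoded by its coefficient
function `f : ℤ → 𝒜`.  Multiplication is determined by
`(f D^i)·(g D^j) = Σ_{r ≥ 0} binom(i,r) f D^r(g) D^{i+j-r}`.
-/

namespace TwoBKP

/-- The generalized binomial coefficient `binom(i,r) = i(i−1)⋯(i−r+1)/r! ∈ ℤ`
for an integer upper index `i` and `r : ℕ`. -/
noncomputable def zchoose (i : ℤ) (r : ℕ) : ℤ := Ring.choose i r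

variable {A : Type*} [CommRing A]

/-- `f : ℤ → 𝒜` represents an element of `𝒟⁻` iff its support is bounded above. -/
def IsPDO (f : ℤ → A) : Prop := ∃ N : ℤ, ∀ i : ℤ, N < i → f i = 0

/-- The product in `𝒟⁻`, coefficientwise: the coefficient of `D^n` in `A·B` is
`Σ_{i+j-r=n, r≥0} binom(i,r) f_i D^r(g_j)`. -/
noncomputable def pmul (D : A → A) (f g : ℤ → A) : ℤ → A := fun n =>
  ∑ᶠ p : ℤ × ℤ,
    if 0 ≤ p.1 + p.2 - n then
      zchoose p.1 (p.1 + p.2 - n).toNat • (f p.1 * D^[(p.1 + p.2 - n).toNat] (g p.2))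
    else 0

/-- The unit `1 = 1·D⁰` of `𝒟⁻`. -/
def pone : ℤ → A := fun n => if n = 0 then (1 : A) else 0

/-- The monomial `D^k` (in particular `pD 1 = D` and `pD (-1) = D⁻¹`). -/
def pD (k : ℤ) : ℤ → A := fun n => if n = k then (1 : A) else 0

/-- The multiplication operator `a·D⁰` attached to `a ∈ 𝒜`. -/
def sc (a : A) : ℤ → A := fun n => if n = 0 then a else 0

/-- The nonnegative (differential-operator) part `A₊ = Σ_{i≥0} f_i D^i`. -/
def posPart (f : ℤ → A) : ℤ → A := fun n => if 0 ≤ n then f n else 0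

/-- The negative part `A₋ = Σ_{i<0} f_i D^i`. -/
def negPart (f : ℤ → A) : ℤ → A := fun n => if n < 0 then f n else 0

/-- The residue `res A = f_{-1}`. -/
def res (f : ℤ → A) : A := f (-1)

/-- The adjoint `A* = Σ_i (−D)^i ∘ f_i` computed in `𝒟⁻`, coefficientwise:
the coefficient of `D^n` in `A*` is `Σ_{i ≥ n} (−1)^i binom(i, i−n) D^{i−n}(f_i)`. -/
noncomputable def adj (D : A → A) (f : ℤ → A) : ℤ → A := fun n =>
  ∑ᶠ i : ℤ,
    if 0 ≤ i - n then
      ((-1 : ℤ) ^ i.natAbs * zchoose i (i - n).toNat) • D^[(i - n).toNat] (f i)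
    else 0

/-- Powers in `𝒟⁻`. -/
noncomputable def ppow (D : A → A) (f : ℤ → A) : ℕ → ℤ → A
  | 0 => pone
  | k + 1 => pmul D f (ppow D f k)

/-- The action of a differential operator `Σ_{i≥0} f_i D^i` on an element of `𝒜`. -/
noncomputable def papply (D : A → A) (f : ℤ → A) (a : A) : A :=
  ∑ᶠ i : ℤ, if 0 ≤ i then f i * D^[i.toNat] a else 0

/-- Conjugation by `D`:  `A ↦ D·A·D⁻¹`. -/
noncomputable def conjD (D : A → A) (f : ℤ → A) : ℤ → A :=
  pmul D (pD 1) (pmul D f (pD (-1)))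

end TwoBKP

/-!
Every coefficient of a product involves only finitely many coefficients of the factors, and the
product of monomials `a D^i · b D^j` is additive in `a` and in `b`; so associativity reduces to
monomials `a D^i`, `b D^j`, `c D^k`. Writing `n = i + j + k - e`, the coefficient of `D^n` in
either bracketing is a sum over `r + s = e`, and the Leibniz rule for `D^t (b · D^u c)` together
with the Chu–Vandermonde identity
`binom(i,r) binom(i+j-r,s) = Σ_{w+u=s} binom(r+w,r) binom(i,r+w) binom(j,u)`
identifies the two.
-/

section

open Finset

theorem Derivation.iterate_leibniz {R A : Type*} [CommSemiring R] [CommSemiring A] [Algebra R A]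
    (D : Derivation R A A) (n : ℕ) (a b : A) :
    D^[n] (a * b) = ∑ x ∈ antidiagonal n, n.choose x.1 • (D^[x.1] a * D^[x.2] b) := by
  induction n with
  | zero => simp
  | succ n ih =>
    rw [sum_antidiagonal_choose_succ_nsmul (M := A) (fun i j => D^[i] a * D^[j] b) n]
    simp only [Function.iterate_succ_apply', ih, map_sum, map_nsmul, Derivation.leibniz,
      smul_eq_mul, smul_add, sum_add_distrib]
    congr 1
    refine sum_congr rfl fun x hx => ?_
    rw [n.choose_symm_of_eq_add (mem_antidiagonal.1 hx).symm, mul_comm]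

theorem Derivation.iterate_apply_eq_pow_apply {R A : Type*} [CommSemiring R] [CommSemiring A]
    [Algebra R A] (D : Derivation R A A) (n : ℕ) (a : A) :
    D^[n] a = (D.toLinearMap ^ n) a :=
  (Module.End.pow_apply _ n a).symm

theorem Derivation.iterate_map_one_eq_zero {R A : Type*} [CommSemiring R] [CommSemiring A]
    [Algebra R A] (D : Derivation R A A) {n : ℕ} (hn : n ≠ 0) : D^[n] 1 = 0 := by
  obtain ⟨n, rfl⟩ := Nat.exists_eq_add_one_of_ne_zero hn
  rw [Function.iterate_succ_apply, D.map_one_eq_zero, iterate_map_zero]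

theorem Ring.choose_mul_choose_sub_add {R : Type*} [CommRing R] [BinomialRing R] (r s : R)
    (k m : ℕ) :
    choose r k * choose (r - k + s) m =
      ∑ x ∈ antidiagonal m, (k + x.1).choose k • (choose r (k + x.1) * choose s x.2) := by
  rw [add_choose_eq m (Commute.all _ _), mul_sum]
  refine sum_congr rfl fun x _ => ?_
  rw [← smul_mul_assoc, choose_smul_choose r (Nat.le_add_right k x.1), Nat.add_sub_cancel_left,
    mul_assoc]

theorem Finset.Nat.sum_antidiagonal_sum_antidiagonal_assoc {M : Type*} [AddCommMonoid M]
    (n : ℕ) (f : ℕ → ℕ → ℕ → M) :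
    ∑ x ∈ antidiagonal n, ∑ y ∈ antidiagonal x.1, f y.1 y.2 x.2 =
      ∑ x ∈ antidiagonal n, ∑ y ∈ antidiagonal x.2, f x.1 y.1 y.2 := by
  simp only [sum_sigma']
  apply sum_nbij' (fun ⟨⟨_, u⟩, ⟨v, w⟩⟩ ↦ ⟨(v, w + u), (w, u)⟩)
    (fun ⟨⟨r, _⟩, ⟨w, u⟩⟩ ↦ ⟨(r + w, u), (r, w)⟩) <;> aesop (add simp [add_assoc])

theorem Finset.sum_Icc_sub_eq_sum_antidiagonal {M : Type*} [AddCommMonoid M] (p : ℤ) (n : ℕ)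
    (f : ℤ → M) : ∑ m ∈ Icc (p - n) p, f m = ∑ x ∈ antidiagonal n, f (p - x.1) := by
  symm
  refine sum_nbij' (fun x ↦ p - x.1) (fun m ↦ ((p - m).toNat, n - (p - m).toNat)) ?_ ?_ ?_ ?_
    (fun _ _ ↦ rfl)
  all_goals
    intro x hx
    simp only [HasAntidiagonal.mem_antidiagonal, mem_Icc] at hx ⊢
  · omega
  · omega
  · ext <;> simp
    omega
  · omega

theorem Finset.sum_comm₃ {α β γ M : Type*} [AddCommMonoid M] {s : Finset α} {t : Finset β}
    {u : Finset γ} (f : α → β → γ → M) :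
    ∑ a ∈ s, ∑ b ∈ t, ∑ c ∈ u, f a b c = ∑ b ∈ t, ∑ c ∈ u, ∑ a ∈ s, f a b c := by
  rw [sum_comm]
  exact sum_congr rfl fun _ _ => sum_comm

end

namespace TwoBKP

open Finset

theorem sum_antidiagonal_zchoose_smul_iterate_mul {R A : Type*} [CommSemiring R] [CommRing A]
    [Algebra R A] (D : Derivation R A A) (i j : ℤ) (e : ℕ) (b c : A) :
    ∑ x ∈ antidiagonal e, (zchoose i x.1 * zchoose (i + j - x.1) x.2) • (D^[x.1] b * D^[x.2] c) =
      ∑ x ∈ antidiagonal e, (zchoose i x.1 * zchoose j x.2) • D^[x.1] (b * D^[x.2] c) := by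
  let G : ℕ → ℕ → ℕ → A := fun v w u =>
    ((v + w).choose v * (zchoose i (v + w) * zchoose j u)) • (D^[v] b * D^[w + u] c)
  calc _ = ∑ x ∈ antidiagonal e, ∑ y ∈ antidiagonal x.2, G x.1 y.1 y.2 := by
        refine sum_congr rfl fun x _ => ?_
        rw [show i + j - x.1 = i - x.1 + j by ring, zchoose, zchoose,
          Ring.choose_mul_choose_sub_add, sum_smul]
        refine sum_congr rfl fun y hy => ?_
        rw [← (mem_antidiagonal.1 hy), nsmul_eq_mul]
        rfl
    _ = ∑ x ∈ antidiagonal e, ∑ y ∈ antidiagonal x.1, G y.1 y.2 x.2 :=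
        (Finset.Nat.sum_antidiagonal_sum_antidiagonal_assoc e G).symm
    _ = _ := by
        refine sum_congr rfl fun x _ => ?_
        rw [Derivation.iterate_leibniz, smul_sum]
        refine sum_congr rfl fun y hy => ?_
        rw [← (mem_antidiagonal.1 hy), ← natCast_zsmul, smul_smul]
        simp only [G, Function.iterate_add_apply]
        congr 1
        ring

@[simp]
theorem zchoose_zero_right (i : ℤ) : zchoose i 0 = 1 :=
  Ring.choose_zero_right i

variable {A : Type*} [CommRing A]

theorem pD_eq_single (k : ℤ) : (pD k : ℤ → A) = Pi.single k 1 := by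
  funext n
  simp [pD, Pi.single_apply]

theorem pone_eq_single : (pone : ℤ → A) = Pi.single 0 1 :=
  pD_eq_single 0

theorem exists_common_bound {f g h : ℤ → A} (hf : IsPDO f) (hg : IsPDO g) (hh : IsPDO h) :
    ∃ N, (∀ i, N < i → f i = 0) ∧ (∀ i, N < i → g i = 0) ∧ (∀ i, N < i → h i = 0) := by
  obtain ⟨Nf, hf⟩ := hf
  obtain ⟨Ng, hg⟩ := hg
  obtain ⟨Nh, hh⟩ := hh
  exact ⟨max (max Nf Ng) Nh, fun i hi => hf i (by omega), fun i hi => hg i (by omega),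
    fun i hi => hh i (by omega)⟩

noncomputable def pmulTerm (D : A → A) (f g : ℤ → A) (n i j : ℤ) : A :=
  if 0 ≤ i + j - n then zchoose i (i + j - n).toNat • (f i * D^[(i + j - n).toNat] (g j)) else 0

variable (D : Derivation ℤ A A) {f g h : ℤ → A}

theorem pmul_apply (n : ℤ) : pmul ⇑D f g n = ∑ᶠ p : ℤ × ℤ, pmulTerm ⇑D f g n p.1 p.2 :=
  rfl

theorem pmulTerm_ne_zero {n i j : ℤ} (hne : pmulTerm ⇑D f g n i j ≠ 0) :
    f i ≠ 0 ∧ g j ≠ 0 ∧ n ≤ i + j := by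
  unfold pmulTerm at hne
  split_ifs at hne with hn
  · refine ⟨fun hf => hne ?_, fun hg => hne ?_, by omega⟩
    · rw [hf, zero_mul, smul_zero]
    · rw [hg, iterate_map_zero, mul_zero, smul_zero]
  · exact absurd rfl hne

theorem pmul_apply_eq_sum {n : ℤ} (I J : Finset ℤ)
    (hIJ : ∀ i j, f i ≠ 0 → g j ≠ 0 → n ≤ i + j → i ∈ I ∧ j ∈ J) :
    pmul ⇑D f g n = ∑ i ∈ I, ∑ j ∈ J, pmulTerm ⇑D f g n i j := by
  rw [← sum_product' I J (pmulTerm ⇑D f g n)]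
  refine finsum_eq_sum_of_support_subset _ fun p hp => ?_
  obtain ⟨hf, hg, hn⟩ := pmulTerm_ne_zero D hp
  exact mem_coe.2 (mem_product.2 (hIJ _ _ hf hg hn))

theorem pmul_apply_eq_sum_Icc {N n : ℤ} (hf : ∀ i, N < i → f i = 0)
    (hg : ∀ j, N < j → g j = 0) :
    pmul ⇑D f g n = ∑ i ∈ Icc (n - N) N, ∑ j ∈ Icc (n - N) N, pmulTerm ⇑D f g n i j := by
  refine pmul_apply_eq_sum D _ _ fun i j hi hj hij => ?_
  have := mt (hf i) hi
  have := mt (hg j) hj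
  simp only [mem_Icc]
  omega

theorem pmul_eq_zero_of_lt {Nf Ng n : ℤ} (hf : ∀ i, Nf < i → f i = 0)
    (hg : ∀ j, Ng < j → g j = 0) (hn : Nf + Ng < n) : pmul ⇑D f g n = 0 := by
  rw [pmul_apply_eq_sum D ∅ ∅ fun i j hi hj hij => ?_, sum_empty]
  have := mt (hf i) hi
  have := mt (hg j) hj
  omega

theorem isPDO_pmul (hf : IsPDO f) (hg : IsPDO g) : IsPDO (pmul ⇑D f g) := by
  obtain ⟨Nf, hf⟩ := hf
  obtain ⟨Ng, hg⟩ := hg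
  exact ⟨Nf + Ng, fun n hn => pmul_eq_zero_of_lt D hf hg hn⟩

theorem pmul_single_single_apply (i j n : ℤ) (a b : A) :
    pmul ⇑D (Pi.single i a) (Pi.single j b) n =
      if 0 ≤ i + j - n then zchoose i (i + j - n).toNat • (a * D^[(i + j - n).toNat] b) else 0 := by
  rw [pmul_apply_eq_sum D {i} {j} fun i' j' hi hj _ => ?_, sum_singleton, sum_singleton]
  · simp [pmulTerm]
  · simp only [mem_singleton]
    exact ⟨by_contra fun h => hi (by simp [h]), by_contra fun h => hj (by simp [h])⟩

theorem pmulTerm_eq_pmul_single (n i j : ℤ) :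
    pmulTerm ⇑D f g n i j = pmul ⇑D (Pi.single i (f i)) (Pi.single j (g j)) n := by
  rw [pmul_single_single_apply]
  rfl

theorem pmul_single_single_apply_sub (i j : ℤ) (r : ℕ) (a b : A) :
    pmul ⇑D (Pi.single i a) (Pi.single j b) (i + j - r) = zchoose i r • (a * D^[r] b) := by
  simp [pmul_single_single_apply]

theorem pD_pmul_pD (k l : ℤ) : pmul ⇑D (pD k) (pD l) = (pD (k + l) : ℤ → A) := by
  funext n
  rw [pD_eq_single, pD_eq_single, pD_eq_single]
  by_cases hn : n ≤ k + l
  · obtain ⟨r, rfl⟩ : ∃ r : ℕ, n = k + l - r := ⟨(k + l - n).toNat, by omega⟩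
    rw [pmul_single_single_apply_sub]
    rcases r with _ | r
    · simp
    · rw [Derivation.iterate_map_one_eq_zero D r.succ_ne_zero, mul_zero, smul_zero,
        Pi.single_eq_of_ne (by omega)]
  · rw [pmul_single_single_apply, if_neg (by omega), Pi.single_eq_of_ne (by omega)]

theorem pone_pmul (f : ℤ → A) : pmul ⇑D pone f = f := by
  funext n
  rw [pmul_apply, finsum_eq_single _ (0, n) fun p hp => ?_]
  · simp [pmulTerm, pone]
  · obtain ⟨i, j⟩ := p
    unfold pmulTerm
    split_ifs with h
    · by_cases hi : i = 0
      · subst hi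
        have hr : (0 + j - n).toNat ≠ 0 := fun h0 => hp (by ext <;> simp; omega)
        rw [zchoose, Ring.choose_zero_pos ℤ (Nat.pos_of_ne_zero hr), zero_smul]
      · rw [pone_eq_single, Pi.single_eq_of_ne hi, zero_mul, smul_zero]
    · rfl

theorem pmul_pone (f : ℤ → A) : pmul ⇑D f pone = f := by
  funext n
  rw [pmul_apply, finsum_eq_single _ (n, 0) fun p hp => ?_]
  · simp [pmulTerm, pone]
  · obtain ⟨i, j⟩ := p
    unfold pmulTerm
    split_ifs with h
    · by_cases hj : j = 0
      · subst hj
        have hr : (i + 0 - n).toNat ≠ 0 := fun h0 => hp (by ext <;> simp; omega)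
        rw [pone_eq_single, Pi.single_eq_same, Derivation.iterate_map_one_eq_zero D hr,
          mul_zero, smul_zero]
      · rw [pone_eq_single, Pi.single_eq_of_ne hj, iterate_map_zero, mul_zero, smul_zero]
    · rfl

theorem pmul_add (hf : IsPDO f) (hg : IsPDO g) (hh : IsPDO h) :
    pmul ⇑D f (g + h) = pmul ⇑D f g + pmul ⇑D f h := by
  obtain ⟨N, hf, hg, hh⟩ := exists_common_bound hf hg hh
  have hgh : ∀ j, N < j → (g + h) j = 0 := fun j hj => by simp [hg j hj, hh j hj]
  funext n
  simp only [Pi.add_apply, pmul_apply_eq_sum_Icc D hf hgh, pmul_apply_eq_sum_Icc D hf hg,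
    pmul_apply_eq_sum_Icc D hf hh, ← sum_add_distrib]
  refine sum_congr rfl fun i _ => sum_congr rfl fun j _ => ?_
  unfold pmulTerm
  split_ifs <;> simp [iterate_map_add, mul_add]

theorem add_pmul (hf : IsPDO f) (hg : IsPDO g) (hh : IsPDO h) :
    pmul ⇑D (f + g) h = pmul ⇑D f h + pmul ⇑D g h := by
  obtain ⟨N, hf, hg, hh⟩ := exists_common_bound hf hg hh
  have hfg : ∀ i, N < i → (f + g) i = 0 := fun i hi => by simp [hf i hi, hg i hi]
  funext n
  simp only [Pi.add_apply, pmul_apply_eq_sum_Icc D hfg hh, pmul_apply_eq_sum_Icc D hf hh,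
    pmul_apply_eq_sum_Icc D hg hh, ← sum_add_distrib]
  refine sum_congr rfl fun i _ => sum_congr rfl fun j _ => ?_
  unfold pmulTerm
  split_ifs <;> simp [add_mul]

theorem single_apply_eq_zero_of_lt {i i' : ℤ} (a : A) (h : i < i') :
    (Pi.single i a : ℤ → A) i' = 0 :=
  Pi.single_eq_of_ne (M := fun _ => A) h.ne' a

theorem pmul_single_single_eq_zero_of_lt {i j n : ℤ} (a b : A) (h : i + j < n) :
    pmul ⇑D (Pi.single i a) (Pi.single j b) n = 0 :=
  pmul_eq_zero_of_lt D (fun _ => single_apply_eq_zero_of_lt a)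
    (fun _ => single_apply_eq_zero_of_lt b) h

theorem pmul_single_sum_single_apply {ι : Type*} (s : Finset ι) (i j n : ℤ) (a : ι → A) (b : A) :
    pmul ⇑D (Pi.single i (∑ x ∈ s, a x)) (Pi.single j b) n =
      ∑ x ∈ s, pmul ⇑D (Pi.single i (a x)) (Pi.single j b) n := by
  simp only [pmul_single_single_apply]
  split_ifs <;> simp [sum_mul, smul_sum]

theorem pmul_single_single_sum_apply {ι : Type*} (s : Finset ι) (i j n : ℤ) (a : A) (b : ι → A) :
    pmul ⇑D (Pi.single i a) (Pi.single j (∑ x ∈ s, b x)) n =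
      ∑ x ∈ s, pmul ⇑D (Pi.single i a) (Pi.single j (b x)) n := by
  simp only [pmul_single_single_apply, Derivation.iterate_apply_eq_pow_apply, map_sum]
  split_ifs <;> simp [mul_sum, smul_sum]

theorem pmul_single_right_eq_sum {P : ℤ → A} {N k n : ℤ} (hP : ∀ m, N < m → P m = 0) (c : A)
    (M : Finset ℤ) (hM : ∀ m, n - k ≤ m → m ≤ N → m ∈ M) :
    pmul ⇑D P (Pi.single k c) n = ∑ m ∈ M, pmul ⇑D (Pi.single m (P m)) (Pi.single k c) n := by
  rw [pmul_apply_eq_sum D M {k} fun m k' hm hk hmk => ?_]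
  · simp [pmulTerm_eq_pmul_single]
  · obtain rfl : k' = k := by_contra fun h => hk (by simp [h])
    exact ⟨hM m (by omega) (not_lt.1 (mt (hP m) hm)), mem_singleton_self k'⟩

theorem pmul_single_left_eq_sum {Q : ℤ → A} {N i n : ℤ} (hQ : ∀ m, N < m → Q m = 0) (a : A)
    (M : Finset ℤ) (hM : ∀ m, n - i ≤ m → m ≤ N → m ∈ M) :
    pmul ⇑D (Pi.single i a) Q n = ∑ m ∈ M, pmul ⇑D (Pi.single i a) (Pi.single m (Q m)) n := by
  rw [pmul_apply_eq_sum D {i} M fun i' m hi hm hmi => ?_]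
  · simp [pmulTerm_eq_pmul_single]
  · obtain rfl : i' = i := by_contra fun h => hi (by simp [h])
    exact ⟨mem_singleton_self i', hM m (by omega) (not_lt.1 (mt (hQ m) hm))⟩

theorem pmul_pmul_single_apply (i j k : ℤ) (e : ℕ) (a b c : A) :
    pmul ⇑D (pmul ⇑D (Pi.single i a) (Pi.single j b)) (Pi.single k c) (i + j + k - e) =
      a * ∑ x ∈ antidiagonal e,
        (zchoose i x.1 * zchoose (i + j - x.1) x.2) • (D^[x.1] b * D^[x.2] c) := by
  rw [pmul_single_right_eq_sum D (fun _ => pmul_single_single_eq_zero_of_lt D a b) c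
    (Icc (i + j - e) (i + j)) fun m hm hm' => mem_Icc.2 ⟨by omega, hm'⟩,
    sum_Icc_sub_eq_sum_antidiagonal, mul_sum]
  refine sum_congr rfl fun x hx => ?_
  have hn : i + j + k - e = i + j - x.1 + k - x.2 := by
    have := mem_antidiagonal.1 hx
    omega
  rw [hn, pmul_single_single_apply_sub, pmul_single_single_apply_sub, smul_mul_assoc, smul_smul,
    mul_assoc, mul_smul_comm, mul_comm (zchoose _ _)]

theorem pmul_single_pmul_apply (i j k : ℤ) (e : ℕ) (a b c : A) :
    pmul ⇑D (Pi.single i a) (pmul ⇑D (Pi.single j b) (Pi.single k c)) (i + j + k - e) =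
      a * ∑ x ∈ antidiagonal e, (zchoose i x.1 * zchoose j x.2) • D^[x.1] (b * D^[x.2] c) := by
  rw [pmul_single_left_eq_sum D (fun _ => pmul_single_single_eq_zero_of_lt D b c) a
    (Icc (j + k - e) (j + k)) fun m hm hm' => mem_Icc.2 ⟨by omega, hm'⟩,
    sum_Icc_sub_eq_sum_antidiagonal, ← Nat.sum_antidiagonal_swap, mul_sum]
  refine sum_congr rfl fun x hx => ?_
  simp only [Prod.fst_swap]
  have hn : i + j + k - e = i + (j + k - x.2) - x.1 := by
    have := mem_antidiagonal.1 hx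
    omega
  rw [hn, pmul_single_single_apply_sub, pmul_single_single_apply_sub,
    Derivation.iterate_apply_eq_pow_apply, map_zsmul, ← Derivation.iterate_apply_eq_pow_apply,
    mul_smul_comm, smul_smul, mul_smul_comm]

theorem pmul_assoc_single (i j k n : ℤ) (a b c : A) :
    pmul ⇑D (pmul ⇑D (Pi.single i a) (Pi.single j b)) (Pi.single k c) n =
      pmul ⇑D (Pi.single i a) (pmul ⇑D (Pi.single j b) (Pi.single k c)) n := by
  by_cases hn : n ≤ i + j + k
  · obtain ⟨e, rfl⟩ : ∃ e : ℕ, n = i + j + k - e := ⟨(i + j + k - n).toNat, by omega⟩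
    rw [pmul_pmul_single_apply, pmul_single_pmul_apply, sum_antidiagonal_zchoose_smul_iterate_mul]
  · rw [pmul_eq_zero_of_lt D (Nf := i + j) (Ng := k)
        (fun _ => pmul_single_single_eq_zero_of_lt D a b) (fun _ => single_apply_eq_zero_of_lt c)
        (by omega),
      pmul_eq_zero_of_lt D (Nf := i) (Ng := j + k) (fun _ => single_apply_eq_zero_of_lt a)
        (fun _ => pmul_single_single_eq_zero_of_lt D b c) (by omega)]

theorem pmul_pmul_left_apply_eq_sum {N : ℤ} (hf : ∀ i, N < i → f i = 0) (hg : ∀ j, N < j → g j = 0)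
    (hh : ∀ k, N < k → h k = 0) (n : ℤ) :
    pmul ⇑D (pmul ⇑D f g) h n =
      ∑ i ∈ Icc (n - 2 * N) N, ∑ j ∈ Icc (n - 2 * N) N, ∑ k ∈ Icc (n - 2 * N) N,
        pmul ⇑D (pmul ⇑D (Pi.single i (f i)) (Pi.single j (g j))) (Pi.single k (h k)) n := by
  -- Indices `i, j, k ≤ N` with `n ≤ i + j + k` lie in `[n - 2N, N]`, and the index `m` of the
  -- intermediate product `f g` in `[n - N, 2N]`.
  have hfg : ∀ m, N + N < m → pmul ⇑D f g m = 0 := fun m => pmul_eq_zero_of_lt D hf hg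
  rw [pmul_apply_eq_sum D (Icc (n - N) (2 * N)) (Icc (n - 2 * N) N) fun m k hm hk hmk => ?_]
  · calc _ = ∑ k ∈ Icc (n - 2 * N) N, ∑ m ∈ Icc (n - N) (2 * N),
          ∑ i ∈ Icc (n - 2 * N) N, ∑ j ∈ Icc (n - 2 * N) N,
            pmul ⇑D (Pi.single m (pmul ⇑D (Pi.single i (f i)) (Pi.single j (g j)) m))
              (Pi.single k (h k)) n := by
          rw [sum_comm]
          refine sum_congr rfl fun k _ => sum_congr rfl fun m hm => ?_
          rw [mem_Icc] at hm
          rw [pmulTerm_eq_pmul_single,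
            pmul_apply_eq_sum D (f := f) (g := g) (Icc (n - 2 * N) N) (Icc (n - 2 * N) N)
              fun i j hi hj hij => ?_,
            pmul_single_sum_single_apply]
          · simp only [pmul_single_sum_single_apply, pmulTerm_eq_pmul_single]
          · have := mt (hf i) hi
            have := mt (hg j) hj
            simp only [mem_Icc]
            omega
      _ = ∑ k ∈ Icc (n - 2 * N) N, ∑ i ∈ Icc (n - 2 * N) N, ∑ j ∈ Icc (n - 2 * N) N,
          ∑ m ∈ Icc (n - N) (2 * N),
            pmul ⇑D (Pi.single m (pmul ⇑D (Pi.single i (f i)) (Pi.single j (g j)) m))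
              (Pi.single k (h k)) n :=
          sum_congr rfl fun _ _ => sum_comm₃ _
      _ = _ := by
          rw [sum_comm₃]
          refine sum_congr rfl fun i hi => sum_congr rfl fun j hj => sum_congr rfl fun k hk => ?_
          rw [mem_Icc] at hi hj hk
          exact (pmul_single_right_eq_sum D (fun _ => pmul_single_single_eq_zero_of_lt D _ _) _ _
            fun m h1 h2 => mem_Icc.2 ⟨by omega, by omega⟩).symm
  · have := mt (hfg m) hm
    have := mt (hh k) hk
    simp only [mem_Icc]
    omega

theorem pmul_pmul_right_apply_eq_sum {N : ℤ} (hf : ∀ i, N < i → f i = 0) (hg : ∀ j, N < j → g j = 0)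
    (hh : ∀ k, N < k → h k = 0) (n : ℤ) :
    pmul ⇑D f (pmul ⇑D g h) n =
      ∑ i ∈ Icc (n - 2 * N) N, ∑ j ∈ Icc (n - 2 * N) N, ∑ k ∈ Icc (n - 2 * N) N,
        pmul ⇑D (Pi.single i (f i)) (pmul ⇑D (Pi.single j (g j)) (Pi.single k (h k))) n := by
  have hgh : ∀ m, N + N < m → pmul ⇑D g h m = 0 := fun m => pmul_eq_zero_of_lt D hg hh
  rw [pmul_apply_eq_sum D (Icc (n - 2 * N) N) (Icc (n - N) (2 * N)) fun i m hi hm him => ?_]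
  · refine sum_congr rfl fun i hi => ?_
    rw [mem_Icc] at hi
    calc _ = ∑ m ∈ Icc (n - N) (2 * N), ∑ j ∈ Icc (n - 2 * N) N, ∑ k ∈ Icc (n - 2 * N) N,
            pmul ⇑D (Pi.single i (f i))
              (Pi.single m (pmul ⇑D (Pi.single j (g j)) (Pi.single k (h k)) m)) n := by
          refine sum_congr rfl fun m hm => ?_
          rw [mem_Icc] at hm
          rw [pmulTerm_eq_pmul_single,
            pmul_apply_eq_sum D (f := g) (g := h) (Icc (n - 2 * N) N) (Icc (n - 2 * N) N)
              fun j k hj hk hjk => ?_,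
            pmul_single_single_sum_apply]
          · simp only [pmul_single_single_sum_apply, pmulTerm_eq_pmul_single]
          · have := mt (hg j) hj
            have := mt (hh k) hk
            simp only [mem_Icc]
            omega
      _ = _ := by
          rw [sum_comm₃]
          refine sum_congr rfl fun j hj => sum_congr rfl fun k hk => ?_
          rw [mem_Icc] at hj hk
          exact (pmul_single_left_eq_sum D (fun _ => pmul_single_single_eq_zero_of_lt D _ _) _ _
            fun m h1 h2 => mem_Icc.2 ⟨by omega, by omega⟩).symm
  · have := mt (hf i) hi
    have := mt (hgh m) hm
    simp only [mem_Icc]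
    omega

theorem pmul_assoc (hf : IsPDO f) (hg : IsPDO g) (hh : IsPDO h) :
    pmul ⇑D (pmul ⇑D f g) h = pmul ⇑D f (pmul ⇑D g h) := by
  obtain ⟨N, hf, hg, hh⟩ := exists_common_bound hf hg hh
  funext n
  simp only [pmul_pmul_left_apply_eq_sum D hf hg hh, pmul_pmul_right_apply_eq_sum D hf hg hh,
    pmul_assoc_single]

end TwoBKP

open TwoBKP in
theorem pdo_first_type_is_ring {A : Type*} [CommRing A] (D : Derivation ℤ A A) :
    -- multiplication is closed on 𝒟⁻
    (∀ f g : ℤ → A, IsPDO f → IsPDO g → IsPDO (pmul ⇑D f g)) ∧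
    -- multiplication is associative
    (∀ f g h : ℤ → A, IsPDO f → IsPDO g → IsPDO h →
        pmul ⇑D (pmul ⇑D f g) h = pmul ⇑D f (pmul ⇑D g h)) ∧
    -- 1 = 1·D⁰ is a two-sided unit
    (∀ f : ℤ → A, IsPDO f → pmul ⇑D pone f = f ∧ pmul ⇑D f pone = f) ∧
    -- multiplication distributes over (componentwise) addition
    (∀ f g h : ℤ → A, IsPDO f → IsPDO g → IsPDO h →
        pmul ⇑D f (g + h) = pmul ⇑D f g + pmul ⇑D f h ∧
        pmul ⇑D (f + g) h = pmul ⇑D f h + pmul ⇑D g h) ∧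
    -- D = 1·D¹ is invertible with inverse 1·D⁻¹
    (pmul ⇑D (pD 1) (pD (-1)) = (pone : ℤ → A) ∧
        pmul ⇑D (pD (-1)) (pD 1) = (pone : ℤ → A)) := by
  refine ⟨fun f g => isPDO_pmul D, fun f g h => pmul_assoc D,
    fun f _ => ⟨pone_pmul D f, pmul_pone D f⟩,
    fun f g h hf hg hh => ⟨pmul_add D hf hg hh, add_pmul D hf hg hh⟩, ?_, ?_⟩
  · rw [pD_pmul_pD, add_neg_cancel]
    rfl
  · rw [pD_pmul_pD, neg_add_cancel]
    rfl
end

section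
/- For all pseudo-differential operators A, B ∈ 𝒟⁻ over a commutative differential ring (𝒜, D), the residue of the commutator is a total derivative: res(A·B) − res(B·A) lies in the image D(𝒜) of the derivation D. Consequently the pairing ⟨A,B⟩ = ∫ res(AB) dx on the quotient 𝒜/D(𝒜) is symmetric. -/
/-!
STATEMENT 5.  For all `A, B ∈ 𝒟⁻`, the residue of the commutator is a total
derivative: `res(A·B) − res(B·A) ∈ D(𝒜)`.  Consequently the pairing
`⟨A,B⟩ = ∫ res(AB) dx` on `𝒜/D(𝒜)` is symmetric.
-/


section Aux

open Polynomial in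
lemma descPochhammer_reflect (n : ℕ) (i : ℤ) :
    (descPochhammer ℤ n).eval ((n : ℤ) - 1 - i) = (-1) ^ n * (descPochhammer ℤ n).eval i := by
  induction n generalizing i with
  | zero => simp
  | succ n ih =>
    conv_rhs => rw [descPochhammer_succ_eval]
    rw [descPochhammer_succ_left]
    have h1 : ((n + 1 : ℕ) : ℤ) - 1 - i = (n : ℤ) - i := by push_cast; ring
    rw [h1, eval_mul, eval_X, eval_comp, eval_sub, eval_X, eval_one]
    have h2 : (n : ℤ) - i - 1 = (n : ℤ) - 1 - i := by ring
    rw [h2, ih]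
    ring

lemma zchoose_reflect (n : ℕ) (i : ℤ) :
    TwoBKP.zchoose ((n : ℤ) - 1 - i) n = (-1) ^ n * TwoBKP.zchoose i n := by
  simp only [TwoBKP.zchoose]
  have h1 := Ring.descPochhammer_eq_factorial_smul_choose (R := ℤ) ((n : ℤ) - 1 - i) n
  have h2 := Ring.descPochhammer_eq_factorial_smul_choose (R := ℤ) i n
  rw [← Polynomial.eval_eq_smeval] at h1 h2
  rw [descPochhammer_reflect, h2] at h1
  have hfac : (n.factorial : ℤ) ≠ 0 := Int.natCast_ne_zero.mpr n.factorial_ne_zero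
  apply mul_left_cancel₀ hfac
  simpa [nsmul_eq_mul, mul_comm, mul_left_comm, mul_assoc] using h1.symm

variable {A : Type*} [CommRing A]

lemma iterate_deriv_zero (D : Derivation ℤ A A) (r : ℕ) : (⇑D)^[r] 0 = 0 :=
  Function.iterate_fixed (map_zero D) r

lemma key_ibp (D : Derivation ℤ A A) (r : ℕ) (a b : A) :
    a * (⇑D)^[r] b - ((-1 : ℤ) ^ r) • (b * (⇑D)^[r] a) ∈ LinearMap.range D.toLinearMap := by
  induction r generalizing a with
  | zero =>
    simp only [Function.iterate_zero, id_eq, pow_zero, one_smul, mul_comm a b, sub_self]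
    exact zero_mem _
  | succ r ih =>
    have ha : D (a * (⇑D)^[r] b) ∈ LinearMap.range D.toLinearMap := ⟨a * (⇑D)^[r] b, rfl⟩
    have hmem := Submodule.sub_mem _ ha (ih (D a))
    convert hmem using 1
    rw [Function.iterate_succ_apply' (⇑D) r b, Function.iterate_succ_apply (⇑D) r a,
      D.leibniz]
    simp only [smul_eq_mul, zsmul_eq_mul, pow_succ, Int.cast_mul, Int.cast_pow,
      Int.cast_neg, Int.cast_one]
    ring

/-- The generic summand appearing in `res (pmul D u v)`. -/
noncomputable def resTerm (D : A → A) (u v : ℤ → A) (p : ℤ × ℤ) : A :=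
  if 0 ≤ p.1 + p.2 - (-1) then
    TwoBKP.zchoose p.1 (p.1 + p.2 - (-1)).toNat •
      (u p.1 * D^[(p.1 + p.2 - (-1)).toNat] (v p.2))
  else 0

lemma res_pmul (D : A → A) (u v : ℤ → A) :
    TwoBKP.res (TwoBKP.pmul D u v) = ∑ᶠ p : ℤ × ℤ, resTerm D u v p := rfl

lemma resTerm_sub_mem (D : Derivation ℤ A A) (u v : ℤ → A) (p : ℤ × ℤ) :
    resTerm ⇑D u v p - resTerm ⇑D v u (p.2, p.1) ∈ LinearMap.range D.toLinearMap := by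
  by_cases h0 : 0 ≤ p.1 + p.2 - (-1)
  · have h0' : 0 ≤ p.2 + p.1 - (-1) := by omega
    simp only [resTerm, if_pos h0, if_pos h0']
    set r := (p.1 + p.2 - (-1)).toNat with hrdef
    have hre : (p.2 + p.1 - (-1)).toNat = r := by omega
    rw [hre]
    have hswap : TwoBKP.zchoose p.2 r = (-1) ^ r * TwoBKP.zchoose p.1 r := by
      have hp2 : p.2 = (r : ℤ) - 1 - p.1 := by omega
      rw [hp2]; exact zchoose_reflect r p.1
    rw [hswap, mul_comm ((-1 : ℤ) ^ r), mul_smul, ← smul_sub]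
    exact Submodule.smul_mem _ _ (key_ibp D r (u p.1) (v p.2))
  · have h0' : ¬ 0 ≤ p.2 + p.1 - (-1) := by omega
    simp only [resTerm, if_neg h0, if_neg h0', sub_zero]
    exact zero_mem _

lemma resTerm_support_finite (D : Derivation ℤ A A) (u v : ℤ → A) (Nu Nv : ℤ)
    (hu : ∀ i, Nu < i → u i = 0) (hv : ∀ i, Nv < i → v i = 0) :
    (Function.support (resTerm ⇑D u v)).Finite := by
  apply Set.Finite.subset (Set.finite_Icc ((-1 - Nv, -1 - Nu) : ℤ × ℤ) (Nu, Nv))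
  intro p hp
  simp only [Function.mem_support] at hp
  by_cases h0 : 0 ≤ p.1 + p.2 - (-1)
  · rw [resTerm, if_pos h0] at hp
    have h1 : p.1 ≤ Nu := by
      by_contra h
      push_neg at h
      rw [hu p.1 h] at hp
      simp at hp
    have h2 : p.2 ≤ Nv := by
      by_contra h
      push_neg at h
      rw [hv p.2 h, iterate_deriv_zero] at hp
      simp at hp
    simp only [Set.mem_Icc, Prod.le_def]
    omega
  · rw [resTerm, if_neg h0] at hp
    exact absurd rfl hp

end Aux

open TwoBKP in
theorem res_commutator_is_total_derivative {A : Type*} [CommRing A]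
    (D : Derivation ℤ A A) (f g : ℤ → A) (hf : IsPDO f) (hg : IsPDO g) :
    res (pmul ⇑D f g) - res (pmul ⇑D g f) ∈ LinearMap.range D.toLinearMap ∧
    (Submodule.Quotient.mk (p := LinearMap.range D.toLinearMap) (res (pmul ⇑D f g))
      = Submodule.Quotient.mk (p := LinearMap.range D.toLinearMap) (res (pmul ⇑D g f))) := by
  classical
  obtain ⟨Nf, hNf⟩ := hf
  obtain ⟨Ng, hNg⟩ := hg
  have hfin1 := resTerm_support_finite D f g Nf Ng hNf hNg
  have hfin2 := resTerm_support_finite D g f Ng Nf hNg hNf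
  have hfin2' : (Function.support fun p : ℤ × ℤ => resTerm ⇑D g f (p.2, p.1)).Finite := by
    have h1 : (fun p : ℤ × ℤ => resTerm ⇑D g f (p.2, p.1))
        = (resTerm ⇑D g f) ∘ (fun p : ℤ × ℤ => (p.2, p.1)) := rfl
    rw [h1, Function.support_comp_eq_preimage]
    exact Set.Finite.preimage
      (fun a _ b _ h => by
        cases a; cases b; simpa [Prod.ext_iff, and_comm] using h) hfin2
  have hd : res (pmul ⇑D f g) - res (pmul ⇑D g f) ∈ LinearMap.range D.toLinearMap := by
    have e2 : (∑ᶠ p : ℤ × ℤ, resTerm ⇑D g f p)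
        = ∑ᶠ p : ℤ × ℤ, resTerm ⇑D g f (p.2, p.1) :=
      (finsum_comp_equiv (Equiv.prodComm ℤ ℤ)).symm
    rw [res_pmul, res_pmul, e2, ← finsum_sub_distrib hfin1 hfin2']
    have hfin : (Function.support fun p : ℤ × ℤ =>
        resTerm ⇑D f g p - resTerm ⇑D g f (p.2, p.1)).Finite :=
      (hfin1.union hfin2').subset (Function.support_sub _ _)
    rw [finsum_eq_sum _ hfin]
    exact Submodule.sum_mem _ fun p _ => resTerm_sub_mem D f g p
  exact ⟨hd, (Submodule.Quotient.eq _).mpr hd⟩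
end

section
/- For every pseudo-differential operator A ∈ 𝒟⁻ over a commutative differential ring (𝒜, D) one has res(A*) = −res(A). Consequently, if 𝒜 has no 2-torsion and A is symmetric (A* = A), then res A = 0. -/
/-!
STATEMENT 6.  For every `A ∈ 𝒟⁻` one has `res(A*) = −res(A)`.  Consequently,
if `𝒜` has no 2-torsion and `A* = A`, then `res A = 0`.
-/

open TwoBKP in
theorem res_adj_eq_neg_res {A : Type*} [CommRing A]
    (D : Derivation ℤ A A) (f : ℤ → A) (hf : IsPDO f) :
    res (adj ⇑D f) = - res f ∧
    ((∀ a : A, a + a = 0 → a = 0) → adj ⇑D f = f → res f = 0) := by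
  have key : res (adj ⇑D f) = - res f := by
    have h1 : res (adj ⇑D f) = ∑ᶠ i : ℤ,
        (if 0 ≤ i - (-1) then
          ((-1 : ℤ) ^ i.natAbs * zchoose i (i - (-1)).toNat) • (⇑D)^[(i - (-1)).toNat] (f i)
        else 0) := rfl
    rw [h1, finsum_eq_single _ (-1 : ℤ)]
    · norm_num [zchoose, Ring.choose_zero_right, res]
    · intro i hi
      rcases lt_or_ge i (-1) with h | h
      · rw [if_neg]; omega
      · have hi0 : 0 ≤ i := by omega
        obtain ⟨m, rfl⟩ := Int.eq_ofNat_of_zero_le hi0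
        rw [if_pos (by omega)]
        have hm : ((m : ℤ) - (-1)).toNat = m + 1 := by omega
        rw [hm]
        have hz : zchoose (m : ℤ) (m+1) = 0 := by
          rw [zchoose, Ring.choose_natCast]
          simp [Nat.choose_eq_zero_of_lt]
        rw [hz, mul_zero, zero_smul]
  refine ⟨key, fun h2 hsym => ?_⟩
  have : res f + res f = 0 := by
    nth_rewrite 1 [← hsym]
    rw [key]
    ring
  exact h2 _ this
end

section
/- Let 𝒜 be a commutative ring with no 2-torsion equipped with a derivation D. If A, B ∈ 𝒟⁻ are anti-symmetric pseudo-differential operators (A* = −A, B* = −B) whose coefficients of D^i coincide for every odd integer i, then A = B. In other words, an anti-symmetric operator in 𝒟⁻ is uniquely determined by its odd-degree coefficients. -/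
/-!
STATEMENT 15.  Over a commutative differential ring with no 2-torsion, an
anti-symmetric operator in `𝒟⁻` is determined by its odd-degree coefficients:
if `A* = −A`, `B* = −B` and the coefficients of `D^i` agree for all odd `i`,
then `A = B`.
-/

open TwoBKP in
theorem antisymmetric_determined_by_odd_coefficients {𝒜 : Type*} [CommRing 𝒜]
    (h2 : ∀ a : 𝒜, a + a = 0 → a = 0)
    (D : Derivation ℤ 𝒜 𝒜) (A B : ℤ → 𝒜) (hA : IsPDO A) (hB : IsPDO B)
    (hAanti : adj ⇑D A = -A) (hBanti : adj ⇑D B = -B)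
    (hodd : ∀ i : ℤ, Odd i → A i = B i) :
    A = B := by
  -- helper facts about iterates of D
  have iter_zero : ∀ k : ℕ, (⇑D)^[k] (0 : 𝒜) = 0 := by
    intro k; induction k with
    | zero => rfl
    | succ k ih => rw [Function.iterate_succ_apply, map_zero, ih]
  have iter_sub : ∀ (k : ℕ) (a b : 𝒜), (⇑D)^[k] (a - b) = (⇑D)^[k] a - (⇑D)^[k] b := by
    intro k; induction k with
    | zero => intro a b; rfl
    | succ k ih => intro a b; simp [Function.iterate_succ_apply, map_sub, ih]
  obtain ⟨NA, hNA⟩ := hA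
  obtain ⟨NB, hNB⟩ := hB
  set N : ℤ := max NA NB with hN
  have hC0 : ∀ i : ℤ, N < i → A i - B i = 0 := by
    intro i hi
    rw [hNA i (lt_of_le_of_lt (le_max_left _ _) hi),
      hNB i (lt_of_le_of_lt (le_max_right _ _) hi), sub_zero]
  -- the term functions in `adj`
  set FA : ℤ → ℤ → 𝒜 := fun n i =>
    if 0 ≤ i - n then
      ((-1 : ℤ) ^ i.natAbs * zchoose i (i - n).toNat) • (⇑D)^[(i - n).toNat] (A i)
    else 0 with hFA
  set FB : ℤ → ℤ → 𝒜 := fun n i =>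
    if 0 ≤ i - n then
      ((-1 : ℤ) ^ i.natAbs * zchoose i (i - n).toNat) • (⇑D)^[(i - n).toNat] (B i)
    else 0 with hFB
  have hsuppA : ∀ n : ℤ, (Function.support (FA n)).Finite := by
    intro n
    apply Set.Finite.subset (Set.finite_Icc n N)
    intro i hi
    simp only [Function.mem_support, hFA] at hi
    constructor
    · by_contra h
      push_neg at h
      exact hi (by rw [if_neg (by omega)])
    · by_contra h
      push_neg at h
      exact hi (by simp [hNA i (lt_of_le_of_lt (le_max_left _ _) h), iter_zero])
  have hsuppB : ∀ n : ℤ, (Function.support (FB n)).Finite := by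
    intro n
    apply Set.Finite.subset (Set.finite_Icc n N)
    intro i hi
    simp only [Function.mem_support, hFB] at hi
    constructor
    · by_contra h
      push_neg at h
      exact hi (by rw [if_neg (by omega)])
    · by_contra h
      push_neg at h
      exact hi (by simp [hNB i (lt_of_le_of_lt (le_max_right _ _) h), iter_zero])
  -- key step: if all coefficients above n of A - B vanish, so does the one at n
  have key : ∀ n : ℤ, (∀ j : ℤ, n < j → A j - B j = 0) → A n - B n = 0 := by
    intro n hn
    rcases Int.even_or_odd n with hev | hod
    · -- even case : use anti-symmetry
      have hadjA : ∑ᶠ i, FA n i = -(A n) := by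
        have := congrFun hAanti n
        simpa [adj, hFA] using this
      have hadjB : ∑ᶠ i, FB n i = -(B n) := by
        have := congrFun hBanti n
        simpa [adj, hFB] using this
      have hsub : ∑ᶠ i, (FA n i - FB n i) = -(A n) + B n := by
        rw [finsum_sub_distrib (hsuppA n) (hsuppB n), hadjA, hadjB]
        ring
      have hFCdef : ∀ i : ℤ, FA n i - FB n i =
          if 0 ≤ i - n then
            ((-1 : ℤ) ^ i.natAbs * zchoose i (i - n).toNat) •
              (⇑D)^[(i - n).toNat] (A i - B i)
          else 0 := by
        intro i
        by_cases h : 0 ≤ i - n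
        · simp only [hFA, hFB, if_pos h, iter_sub, smul_sub]
        · simp only [hFA, hFB, if_neg h, sub_zero]
      have hsingle : ∑ᶠ i, (FA n i - FB n i) = FA n n - FB n n := by
        apply finsum_eq_single
        intro i hi
        rw [hFCdef i]
        by_cases h : 0 ≤ i - n
        · have hgt : n < i := by omega
          rw [hn i hgt, iter_zero, smul_zero, if_pos h]
        · rw [if_neg h]
      have hval : FA n n - FB n n = ((-1 : ℤ) ^ n.natAbs) • (A n - B n) := by
        rw [hFCdef n]
        simp [zchoose, Ring.choose_zero_right]
      have hpow : ((-1 : ℤ) ^ n.natAbs) = 1 := by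
        apply Even.neg_one_pow
        rwa [Int.natAbs_even]
      have heq := hsub
      rw [hsingle, hval, hpow, one_smul] at heq
      exact h2 _ (by linear_combination heq)
    · rw [hodd n hod, sub_self]
  -- downward induction
  have main : ∀ m : ℕ, ∀ n : ℤ, N - m ≤ n → A n - B n = 0 := by
    intro m
    induction m with
    | zero =>
      intro n hnn
      rcases lt_or_eq_of_le hnn with h | h
      · exact hC0 n (by omega)
      · exact key n (fun j hj => hC0 j (by omega))
    | succ m ih =>
      intro n hnn
      exact key n (fun j hj => ih j (by omega))
  funext n
  have := main (N - n).toNat n (by omega)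
  exact sub_eq_zero.mp this
end

section
/- Let 𝒜 be a commutative ℚ-algebra with derivation D, and let Φ = 1 + Σ_{i≥1} a_i D^{−i} and Φ̃ = 1 + Σ_{i≥1} ã_i D^{−i} be pseudo-differential operators in 𝒟⁻ both satisfying the dressing constraint Φ* D Φ = D (equivalently Φ* = D Φ^{−1} D^{−1}). If a_i = ã_i for every odd index i ≥ 1, then Φ = Φ̃. In other words, the even coefficients a_2, a_4, a_6, … of a BKP dressing operator are uniquely determined by its odd coefficients. -/
/-!
STATEMENT 16.  Let `𝒜` be a commutative ℚ-algebra with derivation `D`, and let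
`Φ = 1 + Σ_{i≥1} a_i D^{−i}` and `Φ̃ = 1 + Σ_{i≥1} ã_i D^{−i}` both satisfy the
dressing constraint `Φ* D Φ = D`.  If `a_i = ã_i` for every odd `i ≥ 1`, then
`Φ = Φ̃`: the even coefficients are determined by the odd ones.
-/



section Aux

open TwoBKP

variable {A : Type*} [CommRing A]

lemma zchoose_zero' (i : ℤ) : zchoose i 0 = 1 := Ring.choose_zero_right i

lemma zchoose_one_one' : zchoose 1 1 = 1 := by
  simpa [zchoose] using Ring.choose_one_right (1 : ℤ)

lemma zchoose_one_big' {r : ℕ} (h : 2 ≤ r) : zchoose (1 : ℤ) r = 0 := by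
  have h1 : ((1 : ℕ) : ℤ) = (1 : ℤ) := by norm_num
  rw [zchoose, ← h1, Ring.choose_natCast]
  rw [Nat.choose_eq_zero_of_lt (by omega)]
  norm_num

lemma iterD_zero {D : A → A} (hD0 : D 0 = 0) (r : ℕ) : D^[r] 0 = 0 :=
  Function.iterate_fixed hD0 r

/-- `D · Φ` has coefficients `f_{n-1} + D f_n`. -/
lemma pmul_pD_one (D : A → A) (F : ℤ → A) :
    pmul D (pD 1) F = fun n => F (n - 1) + D (F n) := by
  funext n
  have hsub : Function.support (fun p : ℤ × ℤ =>
      if 0 ≤ p.1 + p.2 - n then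
        zchoose p.1 (p.1 + p.2 - n).toNat •
          ((pD 1 : ℤ → A) p.1 * D^[(p.1 + p.2 - n).toNat] (F p.2))
      else 0) ⊆ (({((1 : ℤ), n - 1), ((1 : ℤ), n)} : Finset (ℤ × ℤ)) : Set (ℤ × ℤ)) := by
    intro p hp
    simp only [Function.mem_support] at hp
    by_cases hg : 0 ≤ p.1 + p.2 - n
    · rw [if_pos hg] at hp
      by_cases h1 : p.1 = 1
      · have hr : (p.1 + p.2 - n).toNat ≤ 1 := by
          by_contra hr
          push_neg at hr
          rw [h1, zchoose_one_big' (by omega), zero_smul] at hp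
          exact hp rfl
        have hp2 : p.2 = n - 1 ∨ p.2 = n := by omega
        simp only [Finset.coe_insert, Finset.coe_singleton, Set.mem_insert_iff,
          Set.mem_singleton_iff, Prod.ext_iff]
        rcases hp2 with h | h
        · exact Or.inl ⟨h1, h⟩
        · exact Or.inr ⟨h1, h⟩
      · have hz : (pD 1 : ℤ → A) p.1 = 0 := by simp [pD, h1]
        rw [hz, zero_mul, smul_zero] at hp
        exact absurd rfl hp
    · rw [if_neg hg] at hp
      exact absurd rfl hp
  have hne : ((1 : ℤ), n - 1) ≠ ((1 : ℤ), n) := by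
    simp only [ne_eq, Prod.ext_iff, not_and]
    intro _
    omega
  simp only [pmul]
  rw [finsum_eq_sum_of_support_subset _ hsub,
    Finset.sum_insert (by simp [hne]), Finset.sum_singleton]
  have e1 : (1 + (n - 1) - n : ℤ) = 0 := by ring
  have e2 : (1 + n - n : ℤ) = 1 := by ring
  simp only [e1, e2]
  norm_num [pD, zchoose_zero', zchoose_one_one']

/-- The adjoint coefficient as a finite sum. -/
lemma adj_eq_sum (D : A → A) (hD0 : D 0 = 0) (F : ℤ → A)
    (hFneg : ∀ i : ℤ, 0 < i → F i = 0) (n : ℤ) :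
    adj D F n = ∑ k ∈ Finset.Icc n 0,
      (((-1 : ℤ) ^ k.natAbs * zchoose k (k - n).toNat) • D^[(k - n).toNat] (F k)) := by
  have hsub : Function.support (fun i : ℤ =>
      if 0 ≤ i - n then
        ((-1 : ℤ) ^ i.natAbs * zchoose i (i - n).toNat) • D^[(i - n).toNat] (F i)
      else 0) ⊆ ((Finset.Icc n 0 : Finset ℤ) : Set ℤ) := by
    intro i hi
    simp only [Function.mem_support] at hi
    by_cases hg : 0 ≤ i - n
    · rw [if_pos hg] at hi
      by_cases hpos : 0 < i
      · rw [hFneg i hpos, iterD_zero hD0, smul_zero] at hi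
        exact absurd rfl hi
      · simp only [Finset.coe_Icc, Set.mem_Icc]
        omega
    · rw [if_neg hg] at hi
      exact absurd rfl hi
  simp only [adj]
  rw [finsum_eq_sum_of_support_subset _ hsub]
  refine Finset.sum_congr rfl fun k hk => ?_
  rw [Finset.mem_Icc] at hk
  rw [if_pos (by omega)]

lemma adj_pos (D : A → A) (hD0 : D 0 = 0) (F : ℤ → A)
    (hFneg : ∀ i : ℤ, 0 < i → F i = 0) {n : ℤ} (hn : 0 < n) :
    adj D F n = 0 := by
  rw [adj_eq_sum D hD0 F hFneg n, Finset.Icc_eq_empty (by omega), Finset.sum_empty]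

lemma adj_zero (D : A → A) (hD0 : D 0 = 0) (F : ℤ → A)
    (hFneg : ∀ i : ℤ, 0 < i → F i = 0) :
    adj D F 0 = F 0 := by
  rw [adj_eq_sum D hD0 F hFneg 0, Finset.Icc_self, Finset.sum_singleton]
  norm_num [zchoose_zero']

/-- The key computation: if the coefficients of `F` and `G` agree from index `N` up,
then the difference of the dressing expressions at coefficient `N` isolates the
coefficients at `N - 1`. -/
lemma key (D : A → A) (hD0 : D 0 = 0) (F G : ℤ → A)
    (hF0 : F 0 = 1) (hFneg : ∀ i : ℤ, 0 < i → F i = 0)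
    (hG0 : G 0 = 1) (hGneg : ∀ i : ℤ, 0 < i → G i = 0)
    (N : ℤ) (hN : N ≤ 0) (hE : ∀ i : ℤ, N ≤ i → F i = G i) :
    pmul D (adj D F) (pmul D (pD 1) F) N - pmul D (adj D G) (pmul D (pD 1) G) N
      = (F (N - 1) - G (N - 1)) + ((-1 : ℤ) ^ (N - 1).natAbs) • (F (N - 1) - G (N - 1)) := by
  set s : Finset (ℤ × ℤ) := Finset.Icc (N - 1) 0 ×ˢ Finset.Icc N 1 with hs
  have hsub : ∀ (F' : ℤ → A), (∀ i : ℤ, 0 < i → F' i = 0) →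
      Function.support (fun p : ℤ × ℤ =>
        if 0 ≤ p.1 + p.2 - N then
          zchoose p.1 (p.1 + p.2 - N).toNat •
            (adj D F' p.1 * D^[(p.1 + p.2 - N).toNat] (F' (p.2 - 1) + D (F' p.2)))
        else 0) ⊆ (s : Set (ℤ × ℤ)) := by
    intro F' hF'neg p hp
    simp only [Function.mem_support] at hp
    by_cases hg : 0 ≤ p.1 + p.2 - N
    · rw [if_pos hg] at hp
      have h1 : p.1 ≤ 0 := by
        by_contra h
        push_neg at h
        rw [adj_pos D hD0 F' hF'neg h, zero_mul, smul_zero] at hp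
        exact hp rfl
      have h2 : p.2 ≤ 1 := by
        by_contra h
        push_neg at h
        have hz : F' (p.2 - 1) + D (F' p.2) = 0 := by
          rw [hF'neg (p.2 - 1) (by omega), hF'neg p.2 (by omega), hD0, add_zero]
        rw [hz, iterD_zero hD0, mul_zero, smul_zero] at hp
        exact hp rfl
      simp only [hs, Finset.coe_product, Set.mem_prod, Finset.mem_coe, Finset.mem_Icc]
      omega
    · rw [if_neg hg] at hp
      exact absurd rfl hp
  have mem1 : ((N - 1 : ℤ), (1 : ℤ)) ∈ s := by
    simp only [hs, Finset.mem_product, Finset.mem_Icc]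
    omega
  have mem2 : ((0 : ℤ), N) ∈ s := by
    simp only [hs, Finset.mem_product, Finset.mem_Icc]
    omega
  rw [pmul_pD_one D F, pmul_pD_one D G]
  simp only [pmul]
  rw [finsum_eq_sum_of_support_subset _ (hsub F hFneg),
    finsum_eq_sum_of_support_subset _ (hsub G hGneg), ← Finset.sum_sub_distrib]
  have key2 : ∀ p ∈ s,
      ((if 0 ≤ p.1 + p.2 - N then
          zchoose p.1 (p.1 + p.2 - N).toNat •
            (adj D F p.1 * D^[(p.1 + p.2 - N).toNat] (F (p.2 - 1) + D (F p.2)))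
        else 0)
      - (if 0 ≤ p.1 + p.2 - N then
          zchoose p.1 (p.1 + p.2 - N).toNat •
            (adj D G p.1 * D^[(p.1 + p.2 - N).toNat] (G (p.2 - 1) + D (G p.2)))
        else 0))
      = (if p = ((N - 1 : ℤ), (1 : ℤ)) then
            ((-1 : ℤ) ^ (N - 1).natAbs) • (F (N - 1) - G (N - 1)) else 0)
        + (if p = ((0 : ℤ), N) then (F (N - 1) - G (N - 1)) else 0) := by
    rintro ⟨p1, p2⟩ hp
    dsimp only
    simp only [hs, Finset.mem_product, Finset.mem_Icc] at hp
    obtain ⟨⟨hp1l, hp1r⟩, hp2l, hp2r⟩ := hp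
    by_cases hg : 0 ≤ p1 + p2 - N
    · rcases eq_or_lt_of_le hp1l with h1 | h1
      · -- p1 = N - 1, which forces p2 = 1
        have hp2 : p2 = 1 := by omega
        subst hp2
        subst h1
        have hne1 : ((N - 1 : ℤ), (1 : ℤ)) ≠ ((0 : ℤ), N) := by
          simp only [ne_eq, Prod.ext_iff, not_and]
          intro h h'
          omega
        rw [if_pos rfl, if_neg hne1, add_zero]
        have hg0 : (N - 1 + 1 - N).toNat = 0 := by omega
        simp only [if_pos hg, hg0, Function.iterate_zero, id_eq]
        have hHF1 : F (1 - 1 : ℤ) + D (F 1) = 1 := by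
          norm_num [hF0, hFneg 1 (by norm_num), hD0]
        have hHG1 : G (1 - 1 : ℤ) + D (G 1) = 1 := by
          norm_num [hG0, hGneg 1 (by norm_num), hD0]
        rw [hHF1, hHG1, mul_one, mul_one, zchoose_zero', one_smul, one_smul]
        rw [adj_eq_sum D hD0 F hFneg (N - 1), adj_eq_sum D hD0 G hGneg (N - 1),
          ← Finset.sum_sub_distrib]
        have hpt : ∀ k ∈ Finset.Icc (N - 1) 0,
            (((-1 : ℤ) ^ k.natAbs * zchoose k (k - (N - 1)).toNat) •
                D^[(k - (N - 1)).toNat] (F k)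
              - ((-1 : ℤ) ^ k.natAbs * zchoose k (k - (N - 1)).toNat) •
                D^[(k - (N - 1)).toNat] (G k))
            = if k = N - 1 then
                ((-1 : ℤ) ^ (N - 1).natAbs) • (F (N - 1) - G (N - 1)) else 0 := by
          intro k hk
          rw [Finset.mem_Icc] at hk
          by_cases hk1 : k = N - 1
          · subst hk1
            have h0 : (N - 1 - (N - 1)).toNat = 0 := by omega
            rw [if_pos rfl]
            simp only [h0, Function.iterate_zero, id_eq, zchoose_zero', mul_one, ← smul_sub]
          · rw [if_neg hk1, hE k (by omega), sub_self]
        rw [Finset.sum_congr rfl hpt, Finset.sum_ite_eq' _ (N - 1 : ℤ),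
          if_pos (by rw [Finset.mem_Icc]; omega)]
      · -- N ≤ p1
        have hadj : adj D F p1 = adj D G p1 := by
          rw [adj_eq_sum D hD0 F hFneg p1, adj_eq_sum D hD0 G hGneg p1]
          refine Finset.sum_congr rfl fun k hk => ?_
          rw [Finset.mem_Icc] at hk
          rw [hE k (by omega)]
        rcases eq_or_lt_of_le hp2l with h2 | h2
        · -- p2 = N, which forces p1 = 0
          subst h2
          have hp1 : p1 = 0 := by omega
          subst hp1
          have hne1 : ((0 : ℤ), N) ≠ ((N - 1 : ℤ), (1 : ℤ)) := by
            simp only [ne_eq, Prod.ext_iff, not_and]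
            intro h h'
            omega
          rw [if_neg hne1, if_pos rfl, if_pos hg, if_pos hg]
          have hg0 : (0 + N - N).toNat = 0 := by omega
          rw [hg0]
          simp only [Function.iterate_zero, id_eq, zchoose_zero', one_smul]
          rw [adj_zero D hD0 F hFneg, adj_zero D hD0 G hGneg, hF0, hG0, one_mul, one_mul,
            hE N le_rfl]
          ring
        · -- N < p2
          have hne1 : ((p1 : ℤ), p2) ≠ ((N - 1 : ℤ), (1 : ℤ)) := by
            simp only [ne_eq, Prod.ext_iff, not_and]
            intro h h'
            omega
          have hne2 : ((p1 : ℤ), p2) ≠ ((0 : ℤ), N) := by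
            simp only [ne_eq, Prod.ext_iff, not_and]
            intro h h'
            omega
          rw [if_neg hne1, if_neg hne2, add_zero, hadj, hE (p2 - 1) (by omega),
            hE p2 (by omega), sub_self]
    · have hne1 : ((p1 : ℤ), p2) ≠ ((N - 1 : ℤ), (1 : ℤ)) := by
        simp only [ne_eq, Prod.ext_iff, not_and]
        intro h h'
        omega
      have hne2 : ((p1 : ℤ), p2) ≠ ((0 : ℤ), N) := by
        simp only [ne_eq, Prod.ext_iff, not_and]
        intro h h'
        omega
      rw [if_neg hg, if_neg hg, sub_self, if_neg hne1, if_neg hne2, add_zero]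
  rw [Finset.sum_congr rfl key2, Finset.sum_add_distrib,
    Finset.sum_ite_eq' s ((N - 1 : ℤ), (1 : ℤ)), Finset.sum_ite_eq' s ((0 : ℤ), N),
    if_pos mem1, if_pos mem2, add_comm]

end Aux


open TwoBKP in
theorem dressing_operator_determined_by_odd_coefficients {𝒜 : Type*} [CommRing 𝒜]
    [Algebra ℚ 𝒜] (D : Derivation ℚ 𝒜 𝒜) (F G : ℤ → 𝒜)
    -- F and G have the form 1 + (terms of negative order)
    (hF0 : F 0 = 1) (hFneg : ∀ i : ℤ, 0 < i → F i = 0)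
    (hG0 : G 0 = 1) (hGneg : ∀ i : ℤ, 0 < i → G i = 0)
    -- both satisfy the dressing constraint Φ* D Φ = D
    (hFdress : pmul ⇑D (adj ⇑D F) (pmul ⇑D (pD 1) F) = pD 1)
    (hGdress : pmul ⇑D (adj ⇑D G) (pmul ⇑D (pD 1) G) = pD 1)
    -- the odd coefficients agree:  a_i = ã_i for odd i ≥ 1
    (hodd : ∀ i : ℤ, i < 0 → Odd i → F i = G i) :
    F = G := by
  have hD0 : (⇑D : 𝒜 → 𝒜) 0 = 0 := map_zero D
  have main : ∀ n : ℕ, ∀ i : ℤ, -(n : ℤ) ≤ i → F i = G i := by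
    intro n
    induction n with
    | zero =>
      intro i hi
      have hi' : (0 : ℤ) ≤ i := by simpa using hi
      rcases eq_or_lt_of_le hi' with h | h
      · rw [← h, hF0, hG0]
      · rw [hFneg i h, hGneg i h]
    | succ n ih =>
      intro i hi
      by_cases hle : -(n : ℤ) ≤ i
      · exact ih i hle
      · push_neg at hle
        have hi' : i = -(n : ℤ) - 1 := by omega
        by_cases hodd' : Odd i
        · exact hodd i (by omega) hodd'
        · have heven : Even i := Int.not_odd_iff_even.mp hodd'
          set N : ℤ := -(n : ℤ) with hNdef
          have hN : N ≤ 0 := by omega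
          have hk := key ⇑D hD0 F G hF0 hFneg hG0 hGneg N hN (fun k hk => ih k hk)
          have hF' : pmul ⇑D (adj ⇑D F) (pmul ⇑D (pD 1) F) N = 0 := by
            rw [hFdress]
            simp only [pD]
            rw [if_neg (by omega)]
          have hG' : pmul ⇑D (adj ⇑D G) (pmul ⇑D (pD 1) G) N = 0 := by
            rw [hGdress]
            simp only [pD]
            rw [if_neg (by omega)]
          rw [hF', hG', sub_self] at hk
          have hNi : N - 1 = i := by omega
          rw [hNi] at hk
          have hevenN : Even i.natAbs := Int.natAbs_even.mpr heven
          rw [hevenN.neg_one_pow, one_zsmul] at hk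
          have h2 : (2 : ℚ) • (F i - G i) = 0 := by
            rw [two_smul, ← hk]
          have h3 : F i - G i = 0 := by
            have := congrArg (fun x => ((2 : ℚ)⁻¹) • x) h2
            simpa [smul_smul] using this
          exact sub_eq_zero.mp h3
  funext i
  exact main i.natAbs i (by omega)
end
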